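/- arXiv:1802.09910 — 2 statements merged into one kernel-verified Lean document; each statement's English description precedes it below -/
import Mathlib

section
/- Let h be a real-analytic germ at 0 ∈ ℝ with h(0) = 0 and h'(0) > 0, and write h(H) = H·g(H) with g real-analytic, g(0) > 0. Define r_h(x,y) = (g(H(x,y))^{1/2}·x, g(H(x,y))^{1/3}·y), where H(x,y) = y³ - x². Then r_h is a local real-analytic diffeomorphism at 0 ∈ ℝ² satisfying H(r_h(x,y)) = h(H(x,y)). -/
/-!
`H(x, y) = y³ - x²` is weighted homogeneous: `H(s^{1/2} x, s^{1/3} y) = s · H(x, y)` for `s ≥ 0`.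
Taking `s = g(H(x, y))`, positive near the origin, gives `H ∘ r_h = H · g(H) = h ∘ H`.
Real powers of a positive analytic function are analytic (restrict the complex power to the
real axis inside the slit plane), and the derivative of `r_h` at `0` is
`diag(g(0)^{1/2}, g(0)^{1/3})`, so the inverse function theorem makes `r_h` injective near `0`.
-/

theorem analyticAt_rpow_const_of_pos {x : ℝ} (c : ℝ) (hx : 0 < x) :
    AnalyticAt ℝ (fun t : ℝ => t ^ c) x := by
  have hcpow : AnalyticAt ℂ (fun z : ℂ => z ^ (c : ℂ)) x :=
    analyticAt_id.cpow analyticAt_const (Complex.ofReal_mem_slitPlane.2 hx)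
  have hre : AnalyticAt ℝ (fun t : ℝ => ((t : ℂ) ^ (c : ℂ)).re) x :=
    Complex.reCLM.analyticAt _ |>.comp (hcpow.restrictScalars.comp (Complex.ofRealCLM.analyticAt x))
  refine hre.congr ?_
  filter_upwards [eventually_gt_nhds hx] with t ht
  rw [← Complex.ofReal_cpow ht.le, Complex.ofReal_re]

theorem AnalyticAt.rpow_const {E : Type*} [NormedAddCommGroup E] [NormedSpace ℝ E]
    {f : E → ℝ} {p : E} (hf : AnalyticAt ℝ f p) (hfp : 0 < f p) (c : ℝ) :
    AnalyticAt ℝ (fun y => f y ^ c) p :=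
  (analyticAt_rpow_const_of_pos c hfp).comp hf

theorem ContinuousLinearMap.det_prodMap_smul_id {𝕜 : Type*} [NontriviallyNormedField 𝕜]
    (c d : 𝕜) :
    ((c • ContinuousLinearMap.id 𝕜 𝕜).prodMap (d • ContinuousLinearMap.id 𝕜 𝕜)).det = c * d := by
  simp [ContinuousLinearMap.det, LinearMap.det_prodMap]

theorem hasFDerivAt_mul_fst_mul_snd {𝕜 : Type*} [NontriviallyNormedField 𝕜]
    {a b : 𝕜 × 𝕜 → 𝕜} (ha : DifferentiableAt 𝕜 a 0) (hb : DifferentiableAt 𝕜 b 0) :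
    HasFDerivAt (fun q => (a q * q.1, b q * q.2))
      ((a 0 • ContinuousLinearMap.id 𝕜 𝕜).prodMap (b 0 • ContinuousLinearMap.id 𝕜 𝕜)) 0 := by
  refine ((ha.hasFDerivAt.mul hasFDerivAt_fst).prodMk
    (hb.hasFDerivAt.mul hasFDerivAt_snd)).congr_fderiv ?_
  ext <;> simp

theorem HasStrictFDerivAt.exists_isOpen_injOn {𝕜 E : Type*} [NontriviallyNormedField 𝕜]
    [CompleteSpace 𝕜] [NormedAddCommGroup E] [NormedSpace 𝕜 E] [FiniteDimensional 𝕜 E]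
    {f : E → E} {f' : E →L[𝕜] E} {p : E} (hf : HasStrictFDerivAt f f' p)
    (hdet : f'.det ≠ 0) :
    ∃ U : Set E, IsOpen U ∧ p ∈ U ∧ Set.InjOn f U := by
  have hf' :
      HasStrictFDerivAt f (f'.toContinuousLinearEquivOfDetNeZero hdet : E →L[𝕜] E) p := by
    rwa [ContinuousLinearMap.coe_toContinuousLinearEquivOfDetNeZero]
  have := FiniteDimensional.complete 𝕜 E
  refine ⟨_, (hf'.toOpenPartialHomeomorph f).open_source,
    hf'.mem_toOpenPartialHomeomorph_source, ?_⟩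
  simpa only [hf'.toOpenPartialHomeomorph_coe] using (hf'.toOpenPartialHomeomorph f).injOn

theorem rpow_scaling_cube_sub_sq {s : ℝ} (hs : 0 ≤ s) (x y : ℝ) :
    (s ^ ((1:ℝ)/3) * y) ^ 3 - (s ^ ((1:ℝ)/2) * x) ^ 2 = s * (y ^ 3 - x ^ 2) := by
  have h3 : (s ^ ((1:ℝ)/3)) ^ 3 = s := by
    rw [one_div]; exact_mod_cast Real.rpow_inv_natCast_pow hs three_ne_zero
  have h2 : (s ^ ((1:ℝ)/2)) ^ 2 = s := by
    rw [one_div]; exact_mod_cast Real.rpow_inv_natCast_pow hs two_ne_zero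
  rw [mul_pow, mul_pow, h3, h2]; ring

/-- For `h(H) = H·g(H)` with `g` real-analytic, `g(0) > 0`, the map
`r_h(x,y) = (g(H)^{1/2}x, g(H)^{1/3}y)`, `H = y³ - x²`, is a local real-analytic
diffeomorphism at `0 ∈ ℝ²` with `H ∘ r_h = h ∘ H`. -/
theorem rh_lifts (g : ℝ → ℝ) (hg : AnalyticAt ℝ g 0) (hg0 : 0 < g 0)
    (H : ℝ × ℝ → ℝ) (hH : H = fun p => p.2 ^ 3 - p.1 ^ 2)
    (h : ℝ → ℝ) (hh : h = fun t => t * g t)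
    (rh : ℝ × ℝ → ℝ × ℝ)
    (hrh : rh = fun p => ((g (H p)) ^ ((1:ℝ)/2) * p.1, (g (H p)) ^ ((1:ℝ)/3) * p.2)) :
    ∃ U : Set (ℝ × ℝ), IsOpen U ∧ (0:ℝ×ℝ) ∈ U ∧
      (∀ p ∈ U, AnalyticAt ℝ rh p) ∧ Set.InjOn rh U ∧
      (fderiv ℝ rh 0).det ≠ 0 ∧
      ∀ p ∈ U, H (rh p) = h (H p) := by
  obtain ⟨V, hV, hVo, hV0⟩ := eventually_nhds_iff.1
    (hg.eventually_analyticAt.and (hg.continuousAt.eventually (lt_mem_nhds hg0)))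
  have hHa : ∀ p, AnalyticAt ℝ H p :=
    fun p => hH ▸ (analyticAt_snd.pow 3).sub (analyticAt_fst.pow 2)
  have hHc : Continuous H := continuous_iff_continuousAt.2 fun p => (hHa p).continuousAt
  have hW0 : (0 : ℝ × ℝ) ∈ H ⁻¹' V := by simpa [hH] using hV0
  have hfactor : ∀ p ∈ H ⁻¹' V, ∀ c : ℝ, AnalyticAt ℝ (fun q => g (H q) ^ c) p :=
    fun p hp c => ((hV _ hp).1.comp (hHa p)).rpow_const (hV _ hp).2 c
  have hrha : ∀ p ∈ H ⁻¹' V, AnalyticAt ℝ rh p := fun p hp =>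
    hrh ▸ ((hfactor p hp _).mul analyticAt_fst).prod ((hfactor p hp _).mul analyticAt_snd)
  have hdet : (fderiv ℝ rh 0).det ≠ 0 := by
    rw [hrh, (hasFDerivAt_mul_fst_mul_snd (hfactor 0 hW0 _).differentiableAt
      (hfactor 0 hW0 _).differentiableAt).fderiv, ContinuousLinearMap.det_prodMap_smul_id]
    have hg_pos := (hV _ hW0).2
    positivity
  obtain ⟨U, hUo, hU0, hinj⟩ := (hrha 0 hW0).hasStrictFDerivAt.exists_isOpen_injOn hdet
  refine ⟨U ∩ H ⁻¹' V, hUo.inter (hVo.preimage hHc), ⟨hU0, hW0⟩, fun p hp => hrha p hp.2,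
    hinj.mono Set.inter_subset_left, hdet, fun p hp => ?_⟩
  have hscale := rpow_scaling_cube_sub_sq (hV _ hp.2).2.le p.1 p.2
  subst hrh hh hH
  simp only at hscale ⊢
  linarith
end

section
/- With H(x,y) = y³ - x² and r_h(x,y) = (g(H)^{1/2} x, g(H)^{1/3} y) for a real-analytic g with g(0) > 0, the Jacobian determinant of r_h equals g(H)^{-1/6}·(g'(H)·H + g(H)). -/
/-!
Write `r_h(p) = (u(H p)·x, v(H p)·y)` with `u = g^{1/2}`, `v = g^{1/3}`. The gradients of the two
factors, `u'(H)·DH` and `v'(H)·DH`, are proportional, so the `xy`-term of the Jacobian cancels and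
`det = uv + u'v·x∂ₓH + uv'·y∂ᵧH`. The cusp `H = y³ - x²` is quasi-homogeneous of weights
`(1/2, 1/3)`, i.e. `½x∂ₓH + ⅓y∂ᵧH = H`, which is exactly the combination the exponents produce.
-/

open Filter

theorem LinearMap.det_prod {R : Type*} [CommRing R] (f g : R × R →ₗ[R] R) :
    (f.prod g).det = f (1, 0) * g (0, 1) - f (0, 1) * g (1, 0) := by
  rw [← LinearMap.det_toMatrix (Module.Basis.finTwoProd R), Matrix.det_fin_two]
  simp [LinearMap.toMatrix_apply]

section Rescaling

variable {𝕜 : Type*} [NontriviallyNormedField 𝕜]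

theorem det_fderiv_mul_fst_mul_snd {a b : 𝕜 × 𝕜 → 𝕜} {p : 𝕜 × 𝕜} {L : 𝕜 × 𝕜 →L[𝕜] 𝕜}
    {a' b' : 𝕜} (ha : HasFDerivAt a (a' • L) p) (hb : HasFDerivAt b (b' • L) p) :
    (fderiv 𝕜 (fun q => (a q * q.1, b q * q.2)) p).det
      = a p * b p + a' * b p * (p.1 * L (1, 0)) + b' * a p * (p.2 * L (0, 1)) := by
  rw [((ha.fun_mul hasFDerivAt_fst).prodMk (hb.fun_mul hasFDerivAt_snd)).fderiv,
    ContinuousLinearMap.det, ContinuousLinearMap.coe_prod, LinearMap.det_prod]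
  simp only [ContinuousLinearMap.toLinearMap_add, ContinuousLinearMap.toLinearMap_smul,
    ContinuousLinearMap.coe_fst, LinearMap.add_apply, LinearMap.smul_apply, LinearMap.fst_apply,
    smul_eq_mul, mul_one, ContinuousLinearMap.coe_coe, ContinuousLinearMap.coe_snd,
    LinearMap.snd_apply, mul_zero, zero_add]
  ring

end Rescaling

theorem hasFDerivAt_cusp (p : ℝ × ℝ) :
    HasFDerivAt (fun q : ℝ × ℝ => q.2 ^ 3 - q.1 ^ 2)
      ((3 * p.2 ^ 2) • ContinuousLinearMap.snd ℝ ℝ ℝ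
        - (2 * p.1) • ContinuousLinearMap.fst ℝ ℝ ℝ) p := by
  have h3 : HasFDerivAt (fun q : ℝ × ℝ => q.2 ^ 3) _ p := (hasFDerivAt_snd (𝕜 := ℝ)).pow 3
  have h2 : HasFDerivAt (fun q : ℝ × ℝ => q.1 ^ 2) _ p := (hasFDerivAt_fst (𝕜 := ℝ)).pow 2
  exact (h3.fun_sub h2).congr_fderiv (by ext <;> simp)

theorem cusp_euler_identity (p : ℝ × ℝ) :
    1 / 2 * (p.1 * fderiv ℝ (fun q : ℝ × ℝ => q.2 ^ 3 - q.1 ^ 2) p (1, 0))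
      + 1 / 3 * (p.2 * fderiv ℝ (fun q : ℝ × ℝ => q.2 ^ 3 - q.1 ^ 2) p (0, 1))
      = p.2 ^ 3 - p.1 ^ 2 := by
  rw [(hasFDerivAt_cusp p).fderiv]
  simp only [sub_apply, smul_apply, ContinuousLinearMap.coe_fst', ContinuousLinearMap.coe_snd',
    smul_eq_mul, mul_zero, mul_one, zero_sub, sub_zero]
  ring

theorem rpow_jacobian_factor {s : ℝ} (hs : 0 < s) (α β c A B : ℝ) :
    s ^ α * s ^ β + c * α * s ^ (α - 1) * s ^ β * A + c * β * s ^ (β - 1) * s ^ α * B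
      = s ^ (α + β - 1) * (c * (α * A + β * B) + s) := by
  have hαβ : s ^ α * s ^ β = s ^ (α + β - 1) * s := by
    rw [← Real.rpow_add hs, ← Real.rpow_add_one hs.ne', sub_add_cancel]
  have hα : s ^ (α - 1) * s ^ β = s ^ (α + β - 1) := by
    rw [← Real.rpow_add hs, sub_add_eq_add_sub]
  have hβ : s ^ (β - 1) * s ^ α = s ^ (α + β - 1) := by
    rw [← Real.rpow_add hs, add_comm α, sub_add_eq_add_sub]
  linear_combination hαβ + c * α * A * hα + c * β * B * hβ

/-- Jacobian determinant of `r_h(x,y) = (g(H)^{1/2}x, g(H)^{1/3}y)` with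
`H = y³ - x²`: `det(Dr_h) = g(H)^{-1/6}·(g'(H)·H + g(H))` near the origin. -/
theorem rh_jacobian (g : ℝ → ℝ) (hg : AnalyticAt ℝ g 0) (hg0 : 0 < g 0)
    (H : ℝ × ℝ → ℝ) (hH : H = fun p => p.2 ^ 3 - p.1 ^ 2)
    (rh : ℝ × ℝ → ℝ × ℝ)
    (hrh : rh = fun p => ((g (H p)) ^ ((1:ℝ)/2) * p.1, (g (H p)) ^ ((1:ℝ)/3) * p.2)) :
    ∀ᶠ p in nhds (0:ℝ×ℝ),
      (fderiv ℝ rh p).det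
        = (g (H p)) ^ (-(1:ℝ)/6) * (deriv g (H p) * H p + g (H p)) := by
  subst hrh
  have hHt : Tendsto H (nhds 0) (nhds 0) :=
    hH ▸ (by fun_prop : Continuous fun p : ℝ × ℝ => p.2 ^ 3 - p.1 ^ 2).tendsto' 0 0 (by simp)
  filter_upwards [hHt.eventually (hg.continuousAt.eventually (eventually_gt_nhds hg0)),
    hHt.eventually (hg.eventually_analyticAt.mono fun t ht => ht.differentiableAt)]
    with p hpos hdiff
  have hHp : HasFDerivAt H (fderiv ℝ H p) p :=
    (hH ▸ hasFDerivAt_cusp p).differentiableAt.hasFDerivAt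
  have hu : HasFDerivAt (fun q => g (H q) ^ ((1 : ℝ) / 2)) _ p :=
    (hdiff.hasDerivAt.rpow_const (Or.inl hpos.ne')).comp_hasFDerivAt p hHp
  have hv : HasFDerivAt (fun q => g (H q) ^ ((1 : ℝ) / 3)) _ p :=
    (hdiff.hasDerivAt.rpow_const (Or.inl hpos.ne')).comp_hasFDerivAt p hHp
  rw [det_fderiv_mul_fst_mul_snd hu hv, rpow_jacobian_factor hpos]
  subst hH
  rw [cusp_euler_identity]
  norm_num
end
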